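/- arXiv:1607.05337 — 2 statements merged into one kernel-verified Lean document; each statement's English description precedes it below -/
import Mathlib

section
/- Let C ⊂ V be a proper closed convex full-dimensional cone, s > 1, and f ∈ HConc_s(C) continuously differentiable on C°, with D(v) = Df(v)/s. Let C_T ⊂ C° be a nonempty open subcone. If the restriction of D to C_T is injective, then f is strictly log concave on C_T: for any non-proportional v, x ∈ C_T one has f(v+x)^{1/s} > f(v)^{1/s} + f(x)^{1/s}. -/
/-!
Put `F = f ^ (1/s)`, which is superadditive on `C` and positively homogeneous of degree one.
If `F v + F x = F (v + x)`, then `u ↦ F (u + x) - F u` is minimal at `u = v`, so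
`∇F (v + x) = ∇F v`, and symmetrically `∇F (v + x) = ∇F x`. Since `D = F ^ (s - 1) • ∇F` and `∇F`
is homogeneous of degree zero, `D v = D (t • x)` for `t = F v / F x`, and injectivity of `D`
forces `v = t • x`.
-/

open Set Topology

variable {V : Type*} [NormedAddCommGroup V] [NormedSpace ℝ V] [FiniteDimensional ℝ V]

/-- The dual cone of `C` inside the continuous dual of `V`. -/
def dualCone (C : Set V) : Set (V →L[ℝ] ℝ) := {w | ∀ v ∈ C, 0 ≤ w v}

/-- The polar transform of a weight-`s` homogeneous function `f` on the cone `C`. -/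
noncomputable def polar (C : Set V) (s : ℝ) (f : V → ℝ) (w : V →L[ℝ] ℝ) : ℝ :=
  sInf ((fun v => (w v / f v ^ (1/s)) ^ (s/(s-1))) '' interior C)

open Filter Pointwise

variable {E : Type*} [NormedAddCommGroup E] [NormedSpace ℝ E]

theorem add_mem_interior_of_convex_of_smul_mem {C : Set E} (hconv : Convex ℝ C)
    (hcone : ∀ v ∈ C, ∀ t : ℝ, 0 ≤ t → t • v ∈ C) {a b : E}
    (ha : a ∈ interior C) (hb : b ∈ C) : a + b ∈ interior C := by
  have hmid : (1 / 2 : ℝ) • a + (1 / 2 : ℝ) • b ∈ interior C :=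
    hconv.combo_interior_self_mem_interior ha hb (by norm_num) (by norm_num) (by norm_num)
  have hscale : (2 : ℝ) • interior C ⊆ interior C := by
    rw [← interior_smul₀ two_ne_zero]
    exact interior_mono (smul_set_subset_iff.2 fun v hv => hcone v hv 2 zero_le_two)
  have h2 : (2 : ℝ) • ((1 / 2 : ℝ) • a + (1 / 2 : ℝ) • b) = a + b := by
    rw [smul_add, smul_smul, smul_smul]; norm_num
  exact h2 ▸ hscale (smul_mem_smul_set hmid)

theorem fderiv_add_eq_of_superadditive_of_eq {F : E → ℝ} {a b : E}
    (hsup : ∀ᶠ u in 𝓝 a, F u + F b ≤ F (u + b)) (heq : F a + F b = F (a + b))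
    (ha : DifferentiableAt ℝ F a) (hab : DifferentiableAt ℝ F (a + b)) :
    fderiv ℝ F (a + b) = fderiv ℝ F a := by
  have hmin : IsLocalMin (fun u => F (u + b) - F u) a :=
    hsup.mono fun u hu => by linarith
  have hshift : HasFDerivAt (fun u => F (u + b)) (fderiv ℝ F (a + b)) a :=
    (hasFDerivAt_comp_add_right b).2 hab.hasFDerivAt
  exact sub_eq_zero.1 (hmin.hasFDerivAt_eq_zero (hshift.sub ha.hasFDerivAt))

theorem fderiv_smul_eq_of_eventually_homogeneous {F : E → ℝ} {x : E} {t : ℝ} (ht : t ≠ 0)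
    (hhom : (fun u => F (t • u)) =ᶠ[𝓝 x] fun u => t * F u) :
    fderiv ℝ F (t • x) = fderiv ℝ F x := by
  have h : t • fderiv ℝ F (t • x) = t • fderiv ℝ F x := by
    rw [← fderiv_comp_smul, hhom.fderiv_eq]
    exact congrFun (fderiv_const_smul_field (f := F) t) x
  exact smul_right_injective _ ht h

theorem inv_smul_fderiv_eq_rpow_smul_fderiv_rpow {f : E → ℝ} {u : E} {s : ℝ} (hs : s ≠ 0)
    (hnonneg : ∀ᶠ w in 𝓝 u, 0 ≤ f w) (hpos : 0 < f u) (hf : DifferentiableAt ℝ f u) :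
    s⁻¹ • fderiv ℝ f u
      = (f u ^ (1 / s)) ^ (s - 1) • fderiv ℝ (fun w => f w ^ (1 / s)) u := by
  have hroot : HasFDerivAt (fun w => f w ^ (1 / s)) (fderiv ℝ (fun w => f w ^ (1 / s)) u) u :=
    (hf.rpow_const (Or.inl hpos.ne')).hasFDerivAt
  have hpow := hroot.rpow_const (p := s) (Or.inl (Real.rpow_pos_of_pos hpos _).ne')
  have hf_eq : (fun w => (f w ^ (1 / s)) ^ s) =ᶠ[𝓝 u] f :=
    hnonneg.mono fun w hw => by simp only [one_div, Real.rpow_inv_rpow hw hs]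
  rw [(hpow.congr_of_eventuallyEq hf_eq.symm).fderiv, smul_smul, inv_mul_cancel_left₀ hs]

theorem fderiv_eq_of_superadditive_of_eq {F : E → ℝ} {C : Set E} (hconv : Convex ℝ C)
    (hcone : ∀ v ∈ C, ∀ t : ℝ, 0 ≤ t → t • v ∈ C)
    (hsup : ∀ u ∈ interior C, ∀ b ∈ interior C, F u + F b ≤ F (u + b))
    (hdiff : DifferentiableOn ℝ F (interior C)) {v x : E} (hv : v ∈ interior C)
    (hx : x ∈ interior C) (heq : F v + F x = F (v + x)) :
    fderiv ℝ F v = fderiv ℝ F x := by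
  have hgrad {a b : E} (ha : a ∈ interior C) (hb : b ∈ interior C)
      (hab : F a + F b = F (a + b)) : fderiv ℝ F (a + b) = fderiv ℝ F a :=
    fderiv_add_eq_of_superadditive_of_eq
      (eventually_of_mem (isOpen_interior.mem_nhds ha) fun u hu => hsup u hu b hb) hab
      (hdiff.differentiableAt (isOpen_interior.mem_nhds ha))
      (hdiff.differentiableAt (isOpen_interior.mem_nhds
        (add_mem_interior_of_convex_of_smul_mem hconv hcone ha (interior_subset hb))))
  rw [← hgrad hv hx heq, ← hgrad hx hv (by rwa [add_comm x, add_comm (F x)]), add_comm]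

theorem rpow_mul_rpow_one_div {s t y : ℝ} (hs : s ≠ 0) (ht : 0 ≤ t) (hy : 0 ≤ y) :
    (t ^ s * y) ^ (1 / s) = t * y ^ (1 / s) := by
  rw [Real.mul_rpow (Real.rpow_nonneg ht s) hy, one_div, Real.rpow_rpow_inv ht hs]

theorem injective_implies_strict_log_concave_general
    (C : Set V) (hCcv : Convex ℝ C)
    (hCcone : ∀ v ∈ C, ∀ t : ℝ, 0 ≤ t → t • v ∈ C)
    (s : ℝ) (hs : 1 < s) (f : V → ℝ)
    (hfhom : ∀ t : ℝ, 0 ≤ t → ∀ v ∈ C, f (t • v) = t ^ s * f v)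
    (hfpos : ∀ v ∈ interior C, 0 < f v)
    (hfconc : ∀ v ∈ C, ∀ x ∈ C, f v ^ (1/s) + f x ^ (1/s) ≤ f (v + x) ^ (1/s))
    (hfC1 : ContDiffOn ℝ 1 f (interior C))
    (T : Set V) (hTsub : T ⊆ interior C)
    (hTcone : ∀ v ∈ T, ∀ t : ℝ, 0 < t → t • v ∈ T)
    (hinj : Set.InjOn (fun v => (s⁻¹ • fderiv ℝ f v : V →L[ℝ] ℝ)) T) :
    ∀ v ∈ T, ∀ x ∈ T, (¬ ∃ t : ℝ, x = t • v) →
      f v ^ (1/s) + f x ^ (1/s) < f (v + x) ^ (1/s) := by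
  intro v hv x hx hprop
  set F : V → ℝ := fun w => f w ^ (1 / s)
  have hs0 : s ≠ 0 := (zero_lt_one.trans hs).ne'
  have hfdiff : DifferentiableOn ℝ f (interior C) := hfC1.differentiableOn one_ne_zero
  have hD {u} (hu : u ∈ interior C) : s⁻¹ • fderiv ℝ f u = F u ^ (s - 1) • fderiv ℝ F u :=
    inv_smul_fderiv_eq_rpow_smul_fderiv_rpow hs0
      (eventually_of_mem (isOpen_interior.mem_nhds hu) fun w hw => (hfpos w hw).le) (hfpos u hu)
      (hfdiff.differentiableAt (isOpen_interior.mem_nhds hu))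
  have hFhom {t : ℝ} (ht : 0 ≤ t) {u} (hu : u ∈ interior C) : F (t • u) = t * F u := by
    simp only [F, hfhom t ht u (interior_subset hu),
      rpow_mul_rpow_one_div hs0 ht (hfpos u hu).le]
  have hvC := hTsub hv
  have hxC := hTsub hx
  refine (hfconc v (interior_subset hvC) x (interior_subset hxC)).lt_of_ne fun heq => hprop ?_
  have hvx : fderiv ℝ F v = fderiv ℝ F x :=
    fderiv_eq_of_superadditive_of_eq hCcv hCcone
      (fun u hu b hb => hfconc u (interior_subset hu) b (interior_subset hb))
      (hfdiff.rpow_const fun u hu => Or.inl (hfpos u hu).ne') hvC hxC heq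
  set t := F v / F x
  have hFx : 0 < F x := Real.rpow_pos_of_pos (hfpos x hxC) _
  have ht : 0 < t := div_pos (Real.rpow_pos_of_pos (hfpos v hvC) _) hFx
  have hvt : v = t • x := hinj hv (hTcone x hx t ht) <| by
    change s⁻¹ • fderiv ℝ f v = s⁻¹ • fderiv ℝ f (t • x)
    rw [hD hvC, hD (hTsub (hTcone x hx t ht)), hFhom ht.le hxC,
      fderiv_smul_eq_of_eventually_homogeneous ht.ne'
        (eventually_of_mem (isOpen_interior.mem_nhds hxC) fun u hu => hFhom ht.le hu),
      hvx, div_mul_cancel₀ _ hFx.ne']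
  exact ⟨t⁻¹, ((inv_smul_eq_iff₀ ht.ne').2 hvt).symm⟩

theorem injective_implies_strict_log_concave
    (C : Set V) (hCcl : IsClosed C) (hCcv : Convex ℝ C)
    (hCcone : ∀ v ∈ C, ∀ t : ℝ, 0 ≤ t → t • v ∈ C)
    (hCproper : ∀ v ∈ C, -v ∈ C → v = 0)
    (hCfull : (interior C).Nonempty)
    (s : ℝ) (hs : 1 < s) (f : V → ℝ)
    (hfusc : UpperSemicontinuousOn f C)
    (hf0 : ∀ v ∈ C, 0 ≤ f v)
    (hfhom : ∀ t : ℝ, 0 ≤ t → ∀ v ∈ C, f (t • v) = t ^ s * f v)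
    (hfpos : ∀ v ∈ interior C, 0 < f v)
    (hfconc : ∀ v ∈ C, ∀ x ∈ C, f v ^ (1/s) + f x ^ (1/s) ≤ f (v + x) ^ (1/s))
    (hfC1 : ContDiffOn ℝ 1 f (interior C))
    (T : Set V) (hTsub : T ⊆ interior C) (hTne : T.Nonempty)
    (hTcone : ∀ v ∈ T, ∀ t : ℝ, 0 < t → t • v ∈ T)
    (hTopen : IsOpen T)
    (hinj : Set.InjOn (fun v => (s⁻¹ • fderiv ℝ f v : V →L[ℝ] ℝ)) T) :
    ∀ v ∈ T, ∀ x ∈ T, (¬ ∃ t : ℝ, x = t • v) →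
      f v ^ (1/s) + f x ^ (1/s) < f (v + x) ^ (1/s) :=
  injective_implies_strict_log_concave_general C hCcv hCcone s hs f hfhom hfpos hfconc hfC1 T hTsub
    hTcone hinj
end

section
/- Let V be a finite-dimensional real vector space, C ⊂ V a proper closed convex full-dimensional cone, s > 1, and f ∈ HConc_s(C). Suppose f is continuously differentiable on C° with normalized gradient D(v) = Df(v)/s, and suppose v₁, v₂ ∈ C° satisfy D(v₁) = D(v₂). Then f(v₁) = f(v₂) and, if moreover f is strictly log concave on C°, v₁ = v₂. -/
open Set Topology

variable {V : Type*} [NormedAddCommGroup V] [NormedSpace ℝ V] [FiniteDimensional ℝ V]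

open Filter

/-!
Write `g = f ^ (1/s)`: it is superadditive and `1`-homogeneous on `C`, hence concave there, and
`f = g ^ s`. Differentiating `f` along the segment from `v` to `v + x` and using the concavity
of `g` on that segment gives the gradient inequality
`Df(v) x ≥ s g(v) ^ (s - 1) (g(v + x) - g(v)) ≥ s g(v) ^ (s - 1) g(x)`,
while Euler's relation gives `Df(v) v = s g(v) ^ s`. If `Df(v₁) = Df(v₂) = L`, evaluating `L` at
`v₂` gives `g(v₂) ^ s ≥ g(v₁) ^ (s - 1) g(v₂)`, i.e. `g(v₁) ≤ g(v₂)`, and symmetrically. Under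
strict superadditivity the second inequality is strict unless `v₂ = t v₁`, and then
`s f(v₂) = L v₂ = t L v₁ = t s f(v₁)` forces `t = 1`.
-/

theorem HasDerivAt.le_of_eventually_le_nhdsGT {φ ψ : ℝ → ℝ} {a b x : ℝ}
    (hφ : HasDerivAt φ a x) (hψ : HasDerivAt ψ b x) (hx : φ x = ψ x)
    (hle : ∀ᶠ t in 𝓝[>] x, φ t ≤ ψ t) : a ≤ b := by
  have hslope : Tendsto (slope (ψ - φ) x) (𝓝[>] x) (𝓝 (b - a)) :=
    (hasDerivAt_iff_tendsto_slope.mp (hψ.sub hφ)).mono_left (nhdsGT_le_nhdsNE x)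
  refine sub_nonneg.mp (ge_of_tendsto hslope ?_)
  filter_upwards [hle, self_mem_nhdsWithin] with t ht hxt
  exact (slope_nonneg_iff_of_le (le_of_lt hxt)).mpr (by simpa [hx] using ht)

theorem Real.le_of_rpow_sub_one_mul_le {a b s : ℝ} (ha : 0 < a) (hb : 0 < b) (hs : 1 < s)
    (h : a ^ (s - 1) * b ≤ b ^ s) : a ≤ b := by
  rw [← Real.rpow_le_rpow_iff ha.le hb.le (sub_pos.mpr hs)]
  refine le_of_mul_le_mul_right ?_ hb
  rwa [Real.rpow_sub_one hb.ne', div_mul_cancel₀ _ hb.ne']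

theorem Real.le_of_rpow_sub_one_mul_le_rpow {b c s : ℝ} (hb : 0 < b)
    (h : b ^ (s - 1) * c ≤ b ^ s) : c ≤ b := by
  rw [Real.rpow_sub_one hb.ne', div_mul_eq_mul_div, div_le_iff₀ hb] at h
  exact le_of_mul_le_mul_left h (Real.rpow_pos_of_pos hb s)

section Homogeneous

variable {E : Type*} [NormedAddCommGroup E] [NormedSpace ℝ E] {f : E → ℝ} {s : ℝ} {v x : E}

theorem fderiv_apply_self_of_rpow_homogeneous (hf : DifferentiableAt ℝ f v)
    (hhom : ∀ t : ℝ, 0 < t → f (t • v) = t ^ s * f v) :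
    fderiv ℝ f v v = s * f v := by
  have hray : HasDerivAt (fun t : ℝ => f (t • v)) (fderiv ℝ f v v) 1 := by
    have hf' : HasFDerivAt f (fderiv ℝ f v) ((1 : ℝ) • v) := by simpa using hf.hasFDerivAt
    simpa [Function.comp_def] using
      hf'.comp_hasDerivAt (1 : ℝ) ((hasDerivAt_id (1 : ℝ)).smul_const v)
  have hpow : HasDerivAt (fun t : ℝ => t ^ s * f v) (s * f v) 1 := by
    simpa using (Real.hasDerivAt_rpow_const (p := s) (Or.inl one_ne_zero)).mul_const (f v)
  refine hray.unique (hpow.congr_of_eventuallyEq ?_)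
  filter_upwards [Ioi_mem_nhds one_pos] with t ht using hhom t ht

theorem le_fderiv_apply_of_rpow_le (hf : DifferentiableAt ℝ f v) {a c : ℝ} (ha : 0 < a)
    (hfv : f v = a ^ s) (hle : ∀ᶠ t in 𝓝[>] 0, (a + t * c) ^ s ≤ f (v + t • x)) :
    s * a ^ (s - 1) * c ≤ fderiv ℝ f v x := by
  have hline : HasDerivAt (fun t : ℝ => f (v + t • x)) (fderiv ℝ f v x) 0 := by
    have hf' : HasFDerivAt f (fderiv ℝ f v) (v + (0 : ℝ) • x) := by simpa using hf.hasFDerivAt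
    simpa [Function.comp_def] using
      hf'.comp_hasDerivAt (0 : ℝ) (((hasDerivAt_id (0 : ℝ)).smul_const x).const_add v)
  have hpow : HasDerivAt (fun t : ℝ => (a + t * c) ^ s) (s * a ^ (s - 1) * c) 0 := by
    have hr := Real.hasDerivAt_rpow_const (x := a + 0 * c) (p := s) (Or.inl (by simpa using ha.ne'))
    simpa [mul_assoc, Function.comp_def] using
      hr.comp (0 : ℝ) (((hasDerivAt_id (0 : ℝ)).mul_const c).const_add a)
  exact hpow.le_of_eventually_le_nhdsGT hline (by simp [hfv]) hle

end Homogeneous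

section Cone

variable {E : Type*} [NormedAddCommGroup E] [NormedSpace ℝ E] {C : Set E} {f : E → ℝ} {s : ℝ}

theorem Convex.add_mem_of_smul_mem (hC : Convex ℝ C)
    (hcone : ∀ v ∈ C, ∀ t : ℝ, 0 ≤ t → t • v ∈ C) {u w : E} (hu : u ∈ C) (hw : w ∈ C) :
    u + w ∈ C := by
  have hmid := hC hu hw (by norm_num : (0 : ℝ) ≤ 1 / 2) (by norm_num : (0 : ℝ) ≤ 1 / 2)
    (by norm_num)
  convert hcone _ hmid 2 (by norm_num) using 1
  rw [smul_add, smul_smul, smul_smul]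
  norm_num

/-- The algebraic part of the paper's `HConc_s(C)`. -/
structure HConcOn (C : Set E) (s : ℝ) (f : E → ℝ) : Prop where
  nonneg : ∀ v ∈ C, 0 ≤ f v
  smul : ∀ t : ℝ, 0 ≤ t → ∀ v ∈ C, f (t • v) = t ^ s * f v
  rpow_add_le : ∀ v ∈ C, ∀ x ∈ C, f v ^ (1 / s) + f x ^ (1 / s) ≤ f (v + x) ^ (1 / s)

namespace HConcOn

theorem rpow_one_div_rpow (hf : HConcOn C s f) (hs : s ≠ 0) {v : E} (hv : v ∈ C) :
    (f v ^ (1 / s)) ^ s = f v := by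
  rw [one_div, Real.rpow_inv_rpow (hf.nonneg v hv) hs]

theorem rpow_one_div_smul (hf : HConcOn C s f) (hs : s ≠ 0) {t : ℝ} (ht : 0 ≤ t) {v : E}
    (hv : v ∈ C) : f (t • v) ^ (1 / s) = t * f v ^ (1 / s) := by
  rw [hf.smul t ht v hv, Real.mul_rpow (by positivity) (hf.nonneg v hv), ← Real.rpow_mul ht,
    mul_one_div_cancel hs, Real.rpow_one]

theorem fderiv_apply_self (hf : HConcOn C s f) {v : E} (hv : v ∈ C)
    (hdf : DifferentiableAt ℝ f v) : fderiv ℝ f v v = s * f v :=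
  fderiv_apply_self_of_rpow_homogeneous hdf fun t ht => hf.smul t ht.le v hv

theorem le_rpow_one_div_add_smul (hf : HConcOn C s f) (hC : Convex ℝ C)
    (hcone : ∀ v ∈ C, ∀ t : ℝ, 0 ≤ t → t • v ∈ C) (hs : s ≠ 0) {v x : E} (hv : v ∈ C)
    (hx : x ∈ C) {t : ℝ} (ht0 : 0 ≤ t) (ht1 : t ≤ 1) :
    (1 - t) * f v ^ (1 / s) + t * f (v + x) ^ (1 / s) ≤ f (v + t • x) ^ (1 / s) := by
  have hvx := hC.add_mem_of_smul_mem hcone hv hx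
  have h1t : 0 ≤ 1 - t := sub_nonneg.mpr ht1
  have hseg : (1 - t) • v + t • (v + x) = v + t • x := by
    rw [sub_smul, smul_add, one_smul]
    abel
  rw [← hf.rpow_one_div_smul hs h1t hv, ← hf.rpow_one_div_smul hs ht0 hvx, ← hseg]
  exact hf.rpow_add_le _ (hcone v hv _ h1t) _ (hcone _ hvx t ht0)

theorem le_fderiv_apply (hf : HConcOn C s f) (hC : Convex ℝ C)
    (hcone : ∀ v ∈ C, ∀ t : ℝ, 0 ≤ t → t • v ∈ C) (hs : 0 < s) {v x : E} (hv : v ∈ C)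
    (hx : x ∈ C) (hfv : 0 < f v) (hdf : DifferentiableAt ℝ f v) :
    s * (f v ^ (1 / s)) ^ (s - 1) * (f (v + x) ^ (1 / s) - f v ^ (1 / s)) ≤
      fderiv ℝ f v x := by
  refine le_fderiv_apply_of_rpow_le hdf (Real.rpow_pos_of_pos hfv _)
    (hf.rpow_one_div_rpow hs.ne' hv).symm ?_
  filter_upwards [Ioo_mem_nhdsGT one_pos] with t ht
  have hvx := hC.add_mem_of_smul_mem hcone hv hx
  have hnonneg : 0 ≤ (1 - t) * f v ^ (1 / s) + t * f (v + x) ^ (1 / s) :=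
    add_nonneg (mul_nonneg (sub_nonneg.mpr ht.2.le) (Real.rpow_nonneg (hf.nonneg v hv) _))
      (mul_nonneg ht.1.le (Real.rpow_nonneg (hf.nonneg _ hvx) _))
  calc (f v ^ (1 / s) + t * (f (v + x) ^ (1 / s) - f v ^ (1 / s))) ^ s
      = ((1 - t) * f v ^ (1 / s) + t * f (v + x) ^ (1 / s)) ^ s := by ring_nf
    _ ≤ (f (v + t • x) ^ (1 / s)) ^ s :=
      Real.rpow_le_rpow hnonneg
        (hf.le_rpow_one_div_add_smul hC hcone hs.ne' hv hx ht.1.le ht.2.le) hs.le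
    _ = f (v + t • x) :=
      hf.rpow_one_div_rpow hs.ne' (hC.add_mem_of_smul_mem hcone hv (hcone x hx t ht.1.le))

theorem rpow_sub_one_mul_le_of_fderiv_eq (hf : HConcOn C s f) (hC : Convex ℝ C)
    (hcone : ∀ v ∈ C, ∀ t : ℝ, 0 ≤ t → t • v ∈ C) (hs : 0 < s) {v w : E}
    (hv : v ∈ C) (hw : w ∈ C) (hfv : 0 < f v) (hdv : DifferentiableAt ℝ f v)
    (hdw : DifferentiableAt ℝ f w) (hvw : fderiv ℝ f v = fderiv ℝ f w) :
    (f v ^ (1 / s)) ^ (s - 1) * (f (v + w) ^ (1 / s) - f v ^ (1 / s)) ≤ (f w ^ (1 / s)) ^ s := by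
  have h := hf.le_fderiv_apply hC hcone hs hv hw hfv hdv
  rw [hvw, hf.fderiv_apply_self hw hdw, ← hf.rpow_one_div_rpow hs.ne' hw, mul_assoc] at h
  exact le_of_mul_le_mul_left h hs

theorem rpow_one_div_le_of_fderiv_eq (hf : HConcOn C s f) (hC : Convex ℝ C)
    (hcone : ∀ v ∈ C, ∀ t : ℝ, 0 ≤ t → t • v ∈ C) (hs : 1 < s) {v w : E}
    (hv : v ∈ C) (hw : w ∈ C) (hfv : 0 < f v) (hfw : 0 < f w) (hdv : DifferentiableAt ℝ f v)
    (hdw : DifferentiableAt ℝ f w) (hvw : fderiv ℝ f v = fderiv ℝ f w) :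
    f v ^ (1 / s) ≤ f w ^ (1 / s) := by
  have hsup : f w ^ (1 / s) ≤ f (v + w) ^ (1 / s) - f v ^ (1 / s) :=
    le_sub_iff_add_le'.mpr (hf.rpow_add_le v hv w hw)
  refine Real.le_of_rpow_sub_one_mul_le (Real.rpow_pos_of_pos hfv _)
    (Real.rpow_pos_of_pos hfw _) hs ?_
  calc (f v ^ (1 / s)) ^ (s - 1) * f w ^ (1 / s)
      ≤ (f v ^ (1 / s)) ^ (s - 1) * (f (v + w) ^ (1 / s) - f v ^ (1 / s)) :=
        mul_le_mul_of_nonneg_left hsup (by positivity)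
    _ ≤ (f w ^ (1 / s)) ^ s :=
        hf.rpow_sub_one_mul_le_of_fderiv_eq hC hcone (by linarith) hv hw hfv hdv hdw hvw

end HConcOn

end Cone

theorem gradient_determines_value_and_point_general
    (C : Set V) (hCcv : Convex ℝ C)
    (hCcone : ∀ v ∈ C, ∀ t : ℝ, 0 ≤ t → t • v ∈ C)
    (s : ℝ) (hs : 1 < s) (f : V → ℝ)
    (hf0 : ∀ v ∈ C, 0 ≤ f v)
    (hfhom : ∀ t : ℝ, 0 ≤ t → ∀ v ∈ C, f (t • v) = t ^ s * f v)
    (hfpos : ∀ v ∈ interior C, 0 < f v)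
    (hfconc : ∀ v ∈ C, ∀ x ∈ C, f v ^ (1/s) + f x ^ (1/s) ≤ f (v + x) ^ (1/s))
    (hfC1 : ContDiffOn ℝ 1 f (interior C))
    (v₁ : V) (hv₁ : v₁ ∈ interior C) (v₂ : V) (hv₂ : v₂ ∈ interior C)
    (hD : (s⁻¹ • fderiv ℝ f v₁ : V →L[ℝ] ℝ) = s⁻¹ • fderiv ℝ f v₂) :
    f v₁ = f v₂ ∧
      ((∀ v ∈ interior C, ∀ x ∈ interior C, (¬ ∃ t : ℝ, x = t • v) →
          f v ^ (1/s) + f x ^ (1/s) < f (v + x) ^ (1/s)) → v₁ = v₂) := by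
  have hf : HConcOn C s f := ⟨hf0, hfhom, hfconc⟩
  have hs0 : 0 < s := by linarith
  have hdf : ∀ v ∈ interior C, DifferentiableAt ℝ f v := fun v hv =>
    (hfC1.contDiffAt (isOpen_interior.mem_nhds hv)).differentiableAt one_ne_zero
  have hL : fderiv ℝ f v₁ = fderiv ℝ f v₂ := smul_right_injective _ (inv_ne_zero hs0.ne') hD
  have hle : ∀ {v w}, v ∈ interior C → w ∈ interior C → fderiv ℝ f v = fderiv ℝ f w →
      f v ^ (1 / s) ≤ f w ^ (1 / s) := fun hv hw =>
    hf.rpow_one_div_le_of_fderiv_eq hCcv hCcone hs (interior_subset hv) (interior_subset hw)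
      (hfpos _ hv) (hfpos _ hw) (hdf _ hv) (hdf _ hw)
  have hr12 := (hle hv₁ hv₂ hL).antisymm (hle hv₂ hv₁ hL.symm)
  have hf12 : f v₁ = f v₂ := by
    rw [← hf.rpow_one_div_rpow hs0.ne' (interior_subset hv₁),
      ← hf.rpow_one_div_rpow hs0.ne' (interior_subset hv₂), hr12]
  refine ⟨hf12, fun hstrict => ?_⟩
  obtain ⟨t, rfl⟩ : ∃ t : ℝ, v₂ = t • v₁ := by
    by_contra hnp
    have hk := hf.rpow_sub_one_mul_le_of_fderiv_eq hCcv hCcone hs0 (interior_subset hv₁)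
      (interior_subset hv₂) (hfpos v₁ hv₁) (hdf v₁ hv₁) (hdf v₂ hv₂) hL
    rw [hr12] at hk
    linarith [Real.le_of_rpow_sub_one_mul_le_rpow (Real.rpow_pos_of_pos (hfpos v₂ hv₂) _) hk,
      hstrict v₁ hv₁ v₂ hv₂ hnp]
  have hscale : t * (s * f v₁) = s * f v₁ := by
    calc t * (s * f v₁) = fderiv ℝ f v₁ (t • v₁) := by
          rw [map_smul, hf.fderiv_apply_self (interior_subset hv₁) (hdf v₁ hv₁), smul_eq_mul]
      _ = s * f v₁ := by rw [hL, hf.fderiv_apply_self (interior_subset hv₂) (hdf _ hv₂), hf12]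
  rw [(mul_eq_right₀ (mul_pos hs0 (hfpos v₁ hv₁)).ne').mp hscale, one_smul]

theorem gradient_determines_value_and_point
    (C : Set V) (hCcl : IsClosed C) (hCcv : Convex ℝ C)
    (hCcone : ∀ v ∈ C, ∀ t : ℝ, 0 ≤ t → t • v ∈ C)
    (hCproper : ∀ v ∈ C, -v ∈ C → v = 0)
    (hCfull : (interior C).Nonempty)
    (s : ℝ) (hs : 1 < s) (f : V → ℝ)
    (hfusc : UpperSemicontinuousOn f C)
    (hf0 : ∀ v ∈ C, 0 ≤ f v)
    (hfhom : ∀ t : ℝ, 0 ≤ t → ∀ v ∈ C, f (t • v) = t ^ s * f v)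
    (hfpos : ∀ v ∈ interior C, 0 < f v)
    (hfconc : ∀ v ∈ C, ∀ x ∈ C, f v ^ (1/s) + f x ^ (1/s) ≤ f (v + x) ^ (1/s))
    (hfC1 : ContDiffOn ℝ 1 f (interior C))
    (v₁ : V) (hv₁ : v₁ ∈ interior C) (v₂ : V) (hv₂ : v₂ ∈ interior C)
    (hD : (s⁻¹ • fderiv ℝ f v₁ : V →L[ℝ] ℝ) = s⁻¹ • fderiv ℝ f v₂) :
    f v₁ = f v₂ ∧
      ((∀ v ∈ interior C, ∀ x ∈ interior C, (¬ ∃ t : ℝ, x = t • v) →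
          f v ^ (1/s) + f x ^ (1/s) < f (v + x) ^ (1/s)) → v₁ = v₂) :=
  gradient_determines_value_and_point_general C hCcv hCcone s hs f hf0 hfhom hfpos hfconc hfC1 v₁
    hv₁ v₂ hv₂ hD
end
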